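/- If N is the Choi operator of an entanglement-breaking channel, i.e., N = Σ_x E_x ⊗ ϱ_x where {E_x} is a POVM on H_A (E_x ⪰ 0, Σ_x E_x = id_A) and each ϱ_x is a density matrix on H_B, then for every W ⪰ 0 with Tr_A W = id_B one has Tr(NW) ≤ dim H_A; hence S(N) ≤ log₂ dim H_A. -/

import Mathlib

open Matrix Kronecker BigOperators ComplexOrder

noncomputable section

/-- Partial trace over the first tensor factor. -/
def ptraceA {A B : Type*} [Fintype A] (W : Matrix (A × B) (A × B) ℂ) : Matrix B B ℂ :=
  Matrix.of fun b b' => ∑ a : A, W (a, b) (a, b')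

/-- Partial trace over the second tensor factor. -/
def ptraceB {A B : Type*} [Fintype B] (W : Matrix (A × B) (A × B) ℂ) : Matrix A A ℂ :=
  Matrix.of fun a a' => ∑ b : B, W (a, b) (a', b)

section Aux

set_option linter.unusedSectionVars false

variable {A B : Type*} [Fintype A] [Fintype B] [DecidableEq A] [DecidableEq B]

lemma psd_eq_conjTranspose_mul_self' {n : Type*} [Fintype n] [DecidableEq n] {P : Matrix n n ℂ}
    (hP : P.PosSemidef) : ∃ C : Matrix n n ℂ, P = Cᴴ * C := by
  open scoped MatrixOrder in
  obtain ⟨B, rfl⟩ := CStarAlgebra.nonneg_iff_eq_star_mul_self.mp hP.nonneg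
  exact ⟨B, rfl⟩

lemma trace_nonneg_of_psd' {n : Type*} [Fintype n] [DecidableEq n] {P : Matrix n n ℂ}
    (hP : P.PosSemidef) : 0 ≤ P.trace := by
  apply Finset.sum_nonneg
  intro i _
  have := hP.dotProduct_mulVec_nonneg (Pi.single i 1)
  simpa [dotProduct, Matrix.mulVec, Pi.single_apply] using this

lemma trace_mul_psd_nonneg' {n : Type*} [Fintype n] [DecidableEq n] {P Q : Matrix n n ℂ}
    (hP : P.PosSemidef) (hQ : Q.PosSemidef) : 0 ≤ (P * Q).trace := by
  obtain ⟨C, rfl⟩ := psd_eq_conjTranspose_mul_self' hQ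
  have h : (P * (Cᴴ * C)).trace = (C * P * Cᴴ).trace := by
    rw [← Matrix.mul_assoc, Matrix.trace_mul_comm, Matrix.mul_assoc]
  rw [h]
  exact trace_nonneg_of_psd' (hP.mul_mul_conjTranspose_same C)

lemma kron_conjTranspose' {P : Matrix A A ℂ} {Q : Matrix B B ℂ} :
    (P ⊗ₖ Q)ᴴ = Pᴴ ⊗ₖ Qᴴ := by
  ext ⟨a, b⟩ ⟨a', b'⟩
  simp [Matrix.conjTranspose_apply, _root_.map_mul]

lemma kron_psd' {P : Matrix A A ℂ} {Q : Matrix B B ℂ} (hP : P.PosSemidef) (hQ : Q.PosSemidef) :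
    (P ⊗ₖ Q).PosSemidef := by
  obtain ⟨C, rfl⟩ := psd_eq_conjTranspose_mul_self' hP
  obtain ⟨D, rfl⟩ := psd_eq_conjTranspose_mul_self' hQ
  rw [Matrix.mul_kronecker_mul, ← kron_conjTranspose']
  exact Matrix.posSemidef_conjTranspose_mul_self _

lemma trace_kron_one_mul' (F : Matrix A A ℂ) (Z : Matrix (A × B) (A × B) ℂ) :
    ((F ⊗ₖ (1 : Matrix B B ℂ)) * Z).trace = (F * ptraceB Z).trace := by
  simp only [Matrix.trace, Matrix.diag, Matrix.mul_apply, ptraceB, Matrix.of_apply,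
    Fintype.sum_prod_type, Matrix.kroneckerMap_apply, Matrix.one_apply, mul_ite, ite_mul,
    mul_zero, zero_mul, mul_one, Finset.sum_ite_eq, Finset.sum_ite_eq', Finset.mul_sum,
    Finset.sum_mul, Finset.mem_univ, if_true]
  exact Finset.sum_congr rfl fun a _ => Finset.sum_comm

lemma trace_one_kron_mul' (G : Matrix B B ℂ) (Z : Matrix (A × B) (A × B) ℂ) :
    (((1 : Matrix A A ℂ) ⊗ₖ G) * Z).trace = (G * ptraceA Z).trace := by
  simp only [Matrix.trace, Matrix.diag, Matrix.mul_apply, ptraceA, Matrix.of_apply,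
    Fintype.sum_prod_type, Matrix.kroneckerMap_apply, Matrix.one_apply, mul_ite, ite_mul,
    mul_zero, zero_mul, one_mul, Finset.sum_ite_eq, Finset.sum_ite_eq', Finset.mul_sum,
    Finset.sum_mul, Finset.mem_univ, if_true]
  have h1 : ∀ a : A, ∀ b : B, (∑ x2 : A, ∑ x3 : B, if a = x2 then G b x3 * Z (x2, x3) (a, b) else 0)
      = ∑ x3 : B, G b x3 * Z (a, x3) (a, b) := by
    intro a b
    rw [Finset.sum_comm]
    simp
  simp only [h1]
  rw [Finset.sum_comm]
  exact Finset.sum_congr rfl fun b _ => Finset.sum_comm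

lemma ptraceB_herm' {W : Matrix (A × B) (A × B) ℂ} {ϱ : Matrix B B ℂ}
    (hW : W.IsHermitian) (hϱ : ϱ.IsHermitian) :
    (ptraceB (W * ((1 : Matrix A A ℂ) ⊗ₖ ϱ))).IsHermitian := by
  ext a a'
  simp only [Matrix.conjTranspose_apply, ptraceB, Matrix.of_apply, Matrix.mul_apply,
    Fintype.sum_prod_type, Matrix.kroneckerMap_apply, Matrix.one_apply, mul_ite, ite_mul,
    mul_zero, zero_mul, mul_one, one_mul, Finset.sum_ite_eq, Finset.sum_ite_eq',
    Finset.mem_univ, if_true, star_sum]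
  have hL : ∀ b : B, (∑ x1 : A, ∑ x2 : B, star (if x1 = a then W (a', b) (x1, x2) * ϱ x2 b else 0))
      = ∑ x2 : B, ϱ b x2 * W (a, x2) (a', b) := by
    intro b
    rw [Finset.sum_comm]
    simp [apply_ite star, star_mul', hϱ.apply, hW.apply, mul_comm]
  have hR : ∀ b : B, (∑ x1 : A, ∑ x2 : B, if x1 = a' then W (a, b) (x1, x2) * ϱ x2 b else 0)
      = ∑ x2 : B, W (a, b) (a', x2) * ϱ x2 b := by
    intro b
    rw [Finset.sum_comm]
    simp
  simp only [hL, hR]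
  rw [Finset.sum_comm]
  exact Finset.sum_congr rfl fun b _ => Finset.sum_congr rfl fun b2 _ => mul_comm _ _

lemma quad_eq_trace' (v : A → ℂ) (M : Matrix A A ℂ) :
    star v ⬝ᵥ M *ᵥ v = ((Matrix.vecMulVec v (star v)) * M).trace := by
  simp only [dotProduct, Matrix.mulVec, Matrix.trace, Matrix.diag, Matrix.mul_apply,
    Matrix.vecMulVec_apply, Pi.star_apply, Finset.mul_sum, Finset.sum_mul]
  rw [Finset.sum_comm]
  exact Finset.sum_congr rfl fun x _ => Finset.sum_congr rfl fun i _ => by ring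

lemma vecMulVec_psd' (v : A → ℂ) : (Matrix.vecMulVec v (star v)).PosSemidef := by
  refine Matrix.PosSemidef.of_dotProduct_mulVec_nonneg ?_ ?_
  · ext i j
    simp [Matrix.conjTranspose_apply, Matrix.vecMulVec_apply, mul_comm]
  · intro x
    have h : star x ⬝ᵥ (Matrix.vecMulVec v (star v)) *ᵥ x
        = (∑ a, star (x a) * v a) * star (∑ a, star (x a) * v a) := by
      simp only [dotProduct, Matrix.mulVec, Matrix.vecMulVec_apply, Pi.star_apply,
        star_sum, star_mul', star_star, Finset.mul_sum, Finset.sum_mul]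
      rw [Finset.sum_comm]
      exact Finset.sum_congr rfl fun a _ => Finset.sum_congr rfl fun a' _ => by ring
    rw [h]
    exact mul_star_self_nonneg _

lemma quad_vecMulVec' (v x : A → ℂ) :
    star x ⬝ᵥ (Matrix.vecMulVec v (star v)) *ᵥ x
      = (∑ a, star (x a) * v a) * star (∑ a, star (x a) * v a) := by
  simp only [dotProduct, Matrix.mulVec, Matrix.vecMulVec_apply, Pi.star_apply,
    star_sum, star_mul', star_star, Finset.mul_sum, Finset.sum_mul]
  rw [Finset.sum_comm]
  exact Finset.sum_congr rfl fun a _ => Finset.sum_congr rfl fun a' _ => by ring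

lemma smul_one_sub_vecMulVec_psd' (v : A → ℂ) :
    ((((∑ a, Complex.normSq (v a) : ℝ)) : ℂ) • (1 : Matrix A A ℂ)
      - Matrix.vecMulVec v (star v)).PosSemidef := by
  set c : ℝ := ∑ a, Complex.normSq (v a) with hc
  refine Matrix.PosSemidef.of_dotProduct_mulVec_nonneg ?_ ?_
  · apply Matrix.IsHermitian.sub
    · simp [Matrix.IsHermitian, Matrix.conjTranspose_smul, Complex.star_def,
        Complex.conj_ofReal]
    · exact (vecMulVec_psd' v).1
  · intro x
    set z : ℂ := ∑ a, star (x a) * v a with hz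
    set nx : ℝ := ∑ a, Complex.normSq (x a) with hnx
    have hx : star x ⬝ᵥ ((1 : Matrix A A ℂ) *ᵥ x) = (nx : ℂ) := by
      push_cast [hnx]
      simp [Matrix.one_mulVec, dotProduct, Complex.normSq_eq_conj_mul_self]
    have hq : star x ⬝ᵥ (((c : ℂ) • (1 : Matrix A A ℂ)
        - Matrix.vecMulVec v (star v)) *ᵥ x)
        = (c : ℂ) * (nx : ℂ) - z * star z := by
      rw [Matrix.sub_mulVec, dotProduct_sub, Matrix.smul_mulVec,
        dotProduct_smul, hx, quad_vecMulVec', smul_eq_mul, ← hz]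
    rw [hq]
    have hzz : z * star z = ((Complex.normSq z : ℝ) : ℂ) := by
      rw [← Complex.mul_conj]; rfl
    rw [hzz]
    have key : Complex.normSq z ≤ c * nx := by
      have h1 : ‖z‖ ≤ ∑ a, ‖x a‖ * ‖v a‖ := by
        refine le_trans (norm_sum_le _ _) ?_
        apply le_of_eq
        exact Finset.sum_congr rfl fun a _ => by
          simp [norm_mul, Complex.norm_conj]
      have h2 : (∑ a, ‖x a‖ * ‖v a‖) ^ 2
          ≤ (∑ a, ‖x a‖ ^ 2) * (∑ a, ‖v a‖ ^ 2) :=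
        Finset.sum_mul_sq_le_sq_mul_sq _ _ _
      have h3 : Complex.normSq z
          ≤ (∑ a, ‖x a‖ ^ 2) * (∑ a, ‖v a‖ ^ 2) := by
        rw [Complex.normSq_eq_norm_sq]
        exact le_trans (pow_le_pow_left₀ (norm_nonneg z) h1 2) h2
      calc Complex.normSq z ≤ _ := h3
        _ = c * nx := by
            rw [hc, hnx, mul_comm]
            congr 1 <;> exact Finset.sum_congr rfl fun a _ => (Complex.normSq_eq_norm_sq _).symm
    have hcast : ((c * nx - Complex.normSq z : ℝ) : ℂ)
        = (c : ℂ) * (nx : ℂ) - ((Complex.normSq z : ℝ) : ℂ) := by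
      push_cast; ring
    rw [← hcast]
    exact Complex.zero_le_real.mpr (by linarith)

lemma sub_kron' (P Q : Matrix A A ℂ) (G : Matrix B B ℂ) :
    (P - Q) ⊗ₖ G = P ⊗ₖ G - Q ⊗ₖ G := by
  ext ⟨a, b⟩ ⟨a', b'⟩
  simp [Matrix.kroneckerMap_apply, sub_mul]

end Aux

/-- For an entanglement-breaking channel `N = Σ_x E_x ⊗ ϱ_x` (with `{E_x}` a POVM and each
`ϱ_x` a density matrix), `Tr(NW) ≤ dim H_A` for every feasible `W`; hence
`S(N) ≤ log₂ dim H_A`. -/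
theorem stmt4 {A B X : Type*} [Fintype A] [Fintype B] [Fintype X]
    [DecidableEq A] [DecidableEq B] [Nonempty A] [Nonempty B]
    (E : X → Matrix A A ℂ) (ϱ : X → Matrix B B ℂ)
    (hE : ∀ x, (E x).PosSemidef) (hEsum : ∑ x : X, E x = 1)
    (hϱ : ∀ x, (ϱ x).PosSemidef) (hϱtr : ∀ x, (ϱ x).trace = 1)
    (N : Matrix (A × B) (A × B) ℂ) (hN : N = ∑ x : X, (E x) ⊗ₖ (ϱ x)) :
    (∀ W : Matrix (A × B) (A × B) ℂ, W.PosSemidef → ptraceA W = 1 →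
      ((N * W).trace).re ≤ Fintype.card A) ∧
    Real.logb 2 (sSup {x : ℝ | ∃ W : Matrix (A × B) (A × B) ℂ,
        W.PosSemidef ∧ ptraceA W = 1 ∧ ((N * W).trace).re = x})
      ≤ Real.logb 2 (Fintype.card A) := by
  have hNpsd : N.PosSemidef := by
    rw [hN]
    refine Finset.sum_induction _ _ (fun a b ha hb => ha.add hb) ?_
      (fun x _ => kron_psd' (hE x) (hϱ x))
    exact Matrix.PosSemidef.zero
  have hbound : ∀ W : Matrix (A × B) (A × B) ℂ, W.PosSemidef → ptraceA W = 1 →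
      ((N * W).trace).re ≤ Fintype.card A := by
    intro W hW hWA
    set M : X → Matrix A A ℂ := fun x => ptraceB (W * ((1 : Matrix A A ℂ) ⊗ₖ ϱ x)) with hM
    have key : ∀ (x : X) (F : Matrix A A ℂ), ((F ⊗ₖ ϱ x) * W).trace = (F * M x).trace := by
      intro x F
      have h1 : F ⊗ₖ ϱ x = ((1 : Matrix A A ℂ) ⊗ₖ ϱ x) * (F ⊗ₖ (1 : Matrix B B ℂ)) := by
        rw [← Matrix.mul_kronecker_mul, one_mul, mul_one]
      rw [h1, Matrix.mul_assoc, Matrix.trace_mul_comm, Matrix.mul_assoc, trace_kron_one_mul']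
    have hIkW : ∀ x : X, (((1 : Matrix A A ℂ) ⊗ₖ ϱ x) * W).trace = 1 := by
      intro x
      rw [trace_one_kron_mul', hWA, mul_one, hϱtr]
    have hMpsd : ∀ x, (M x).PosSemidef := by
      intro x
      refine .of_dotProduct_mulVec_nonneg (ptraceB_herm' hW.1 (hϱ x).1) fun v => ?_
      rw [quad_eq_trace', ← key]
      exact trace_mul_psd_nonneg' (kron_psd' (vecMulVec_psd' v) (hϱ x)) hW
    have hMle : ∀ x, ((1 : Matrix A A ℂ) - M x).PosSemidef := by
      intro x
      refine .of_dotProduct_mulVec_nonneg ((Matrix.isHermitian_one).sub (hMpsd x).1) fun v => ?_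
      set c : ℝ := ∑ a, Complex.normSq (v a) with hc
      have hv : star v ⬝ᵥ (((1 : Matrix A A ℂ) - M x) *ᵥ v)
          = ((((c : ℂ) • (1 : Matrix A A ℂ) - Matrix.vecMulVec v (star v)) ⊗ₖ ϱ x) * W).trace := by
        rw [sub_kron', Matrix.smul_kronecker, Matrix.sub_mul, Matrix.smul_mul,
          Matrix.trace_sub, Matrix.trace_smul, hIkW, key, ← quad_eq_trace',
          Matrix.sub_mulVec, dotProduct_sub, Matrix.one_mulVec, smul_eq_mul, mul_one]
        congr 1
        push_cast [hc]
        simp [dotProduct, Complex.normSq_eq_conj_mul_self]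
      rw [hv]
      exact trace_mul_psd_nonneg' (kron_psd' (smul_one_sub_vecMulVec_psd' v) (hϱ x)) hW
    have hxle : ∀ x, ((E x * M x).trace).re ≤ ((E x).trace).re := by
      intro x
      have h0 : 0 ≤ ((E x) * ((1 : Matrix A A ℂ) - M x)).trace :=
        trace_mul_psd_nonneg' (hE x) (hMle x)
      rw [Matrix.mul_sub, Matrix.mul_one, Matrix.trace_sub] at h0
      have := (Complex.le_def.mp h0).1
      simp only [Complex.zero_re, Complex.sub_re] at this
      linarith
    have htr : (N * W).trace = ∑ x : X, (E x * M x).trace := by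
      rw [hN, Finset.sum_mul, Matrix.trace_sum]
      exact Finset.sum_congr rfl fun x _ => key x (E x)
    rw [htr]
    have hre : (∑ x : X, (E x * M x).trace).re = ∑ x : X, ((E x * M x).trace).re := by
      simp [Complex.re_sum]
    rw [hre]
    calc ∑ x : X, ((E x * M x).trace).re ≤ ∑ x : X, ((E x).trace).re :=
          Finset.sum_le_sum fun x _ => hxle x
      _ = ((∑ x : X, E x).trace).re := by
          rw [Matrix.trace_sum]
          simp [Complex.re_sum]
      _ = Fintype.card A := by
          rw [hEsum, Matrix.trace_one]
          simp
  refine ⟨hbound, ?_⟩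
  set S : Set ℝ := {x : ℝ | ∃ W : Matrix (A × B) (A × B) ℂ,
      W.PosSemidef ∧ ptraceA W = 1 ∧ ((N * W).trace).re = x} with hS
  have hub : sSup S ≤ Fintype.card A := by
    refine Real.sSup_le ?_ (by positivity)
    rintro y ⟨W, hW, hWA, rfl⟩
    exact hbound W hW hWA
  have hlb : 0 ≤ sSup S := by
    apply Real.sSup_nonneg
    rintro y ⟨W, hW, hWA, rfl⟩
    exact (Complex.le_def.mp (trace_mul_psd_nonneg' hNpsd hW)).1
  have hcard : (1 : ℝ) ≤ Fintype.card A := by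
    exact_mod_cast Fintype.card_pos
  rcases eq_or_lt_of_le hlb with h0 | h0
  · rw [← h0, Real.logb_zero]
    exact Real.logb_nonneg one_lt_two hcard
  · exact Real.logb_le_logb_of_le one_lt_two h0 hub
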